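/- Let (X,w) be a properly weighted d-poset, let −1 ≤ i ≤ j ≤ d be integers, let z ∈ X(i), and let x ∈ X(j) with x ≥ z. Then w(X(d)_z)^{−1}·(F^min_{j,d}/F^max_{i,j,d})·w(x) ≤ w_z(x) ≤ w(X(d)_z)^{−1}·(F^max_{j,d}/F^min_{i,j,d})·w(x), where w_z is the weight function induced by w on the link X_z. -/

import Mathlib

open scoped Classical

noncomputable section

namespace FK

variable {V : Type*} [Fintype V] [PartialOrder V]

/-- The set of faces of dimension `i`. -/
def faces (dim : V → ℤ) (i : ℤ) : Finset V :=
  Finset.univ.filter fun x => dim x = i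

/-- The set of faces of dimension `i` lying above `z`. -/
def facesAbove (dim : V → ℤ) (i : ℤ) (z : V) : Finset V :=
  Finset.univ.filter fun x => dim x = i ∧ z ≤ x

/-- The set of faces of dimension `i` lying below `y`. -/
def facesBelow (dim : V → ℤ) (i : ℤ) (y : V) : Finset V :=
  Finset.univ.filter fun x => dim x = i ∧ x ≤ y

/-- The set of faces of dimension `j` lying between `x` and `z`. -/
def facesBetween (dim : V → ℤ) (j : ℤ) (x z : V) : Finset V :=
  Finset.univ.filter fun y => dim y = j ∧ x ≤ y ∧ y ≤ z

/-- Total weight of a finite set of faces. -/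
def wsum (w : V → ℝ) (A : Finset V) : ℝ := ∑ x ∈ A, w x

/-- `(V, dim)` is a `d`-poset with least face `bot` (of dimension `-1`). -/
structure IsDPoset (dim : V → ℤ) (d : ℤ) (bot : V) : Prop where
  dim_strictMono : ∀ ⦃x y : V⦄, x < y → dim x < dim y
  dim_covBy : ∀ ⦃x y : V⦄, x ⋖ y → dim y = dim x + 1
  bot_le : ∀ x : V, bot ≤ x
  dim_bot : dim bot = -1
  pure : ∀ x : V, ∃ y : V, x ≤ y ∧ dim y = d

/-- Graded poset axioms. -/
structure IsGraded (dim : V → ℤ) : Prop where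
  dim_strictMono : ∀ ⦃x y : V⦄, x < y → dim x < dim y
  dim_covBy : ∀ ⦃x y : V⦄, x ⋖ y → dim y = dim x + 1

/-- `w` is a proper weight function on the `d`-poset `(V, dim)`. -/
structure IsProperWeight (dim : V → ℤ) (d : ℤ) (w : V → ℝ) : Prop where
  pos : ∀ x : V, 0 < w x
  total : wsum w (faces dim d) = 1
  eq : ∀ x : V, w x = ∑ y ∈ facesAbove dim d x, w y / ((facesBelow dim (dim x) y).card : ℝ)

/-- The weight function induced on the link of `z`. -/
def linkWeight (dim : V → ℤ) (d : ℤ) (w : V → ℝ) (z x : V) : ℝ :=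
  (wsum w (facesAbove dim d z))⁻¹ *
    ∑ y ∈ facesAbove dim d x, w y / ((facesBetween dim (dim x) z y).card : ℝ)

/-- An `R`-orientation on the graded poset `(V, dim)`. -/
structure IsOrientation (R : Type*) [CommRing R] (dim : V → ℤ) (sgn : V → V → R) : Prop where
  isUnit : ∀ ⦃x y : V⦄, x ⋖ y → IsUnit (sgn y x)
  sum_eq_zero : ∀ ⦃x z : V⦄, x ≤ z → dim z = dim x + 2 →
    ∑ y ∈ Finset.univ.filter (fun y => x < y ∧ y < z), sgn z y * sgn y x = 0

/-- The restriction maps of a sheaf compose. -/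
structure IsSheafRes (R : Type*) [CommRing R] (F : V → Type*)
    [∀ x, AddCommGroup (F x)] [∀ x, Module R (F x)]
    (res : ∀ x y : V, x ≤ y → (F x →ₗ[R] F y)) : Prop where
  refl : ∀ x : V, res x x le_rfl = LinearMap.id
  trans : ∀ ⦃x y z : V⦄ (hxy : x ≤ y) (hyz : y ≤ z),
    (res y z hyz).comp (res x y hxy) = res x z (hxy.trans hyz)

/-- `i`-cochains with coefficients in the sheaf `F`. -/
abbrev Cochain (dim : V → ℤ) (F : V → Type*) (i : ℤ) : Type _ :=
  ∀ x : {x : V // dim x = i}, F x.1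

/-- Cochains on the link of `u`, indexed by the ambient dimension `i`
(i.e. link-dimension `i - dim u - 1`). -/
abbrev LCochain (dim : V → ℤ) (F : V → Type*) (u : V) (i : ℤ) : Type _ :=
  ∀ x : {x : V // dim x = i ∧ u ≤ x}, F x.1

section Sheaf

variable {R : Type*} [CommRing R] (dim : V → ℤ) (F : V → Type*)
  [∀ x, AddCommGroup (F x)] [∀ x, Module R (F x)]
  (sgn : V → V → R) (res : ∀ x y : V, x ≤ y → (F x →ₗ[R] F y))
  (w : V → ℝ) (d : ℤ)

/-- The coboundary map, from dimension `i` to dimension `j` (intended: `j = i + 1`). -/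
def coboundary (i j : ℤ) (f : Cochain dim F i) : Cochain dim F j := fun y =>
  ∑ x : {x : V // dim x = i},
    if h : x.1 ≤ y.1 then sgn y.1 x.1 • res x.1 y.1 h (f x) else 0

/-- The coboundary map on the link of `u`. -/
def lcoboundary (u : V) (i j : ℤ) (f : LCochain dim F u i) : LCochain dim F u j := fun y =>
  ∑ x : {x : V // dim x = i ∧ u ≤ x},
    if h : x.1 ≤ y.1 then sgn y.1 x.1 • res x.1 y.1 h (f x) else 0

/-- Weighted Hamming norm of a cochain. -/
def cnorm {i : ℤ} (f : Cochain dim F i) : ℝ :=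
  ∑ x : {x : V // dim x = i}, if f x ≠ 0 then w x.1 else 0

/-- Norm of a cochain on the link of `u`, w.r.t. the weight induced on the link. -/
def lnorm (u : V) {i : ℤ} (f : LCochain dim F u i) : ℝ :=
  ∑ x : {x : V // dim x = i ∧ u ≤ x}, if f x ≠ 0 then linkWeight dim d w u x.1 else 0

/-- `i`-cocycles. -/
def cocycles (i : ℤ) : Set (Cochain dim F i) :=
  {f | coboundary dim F sgn res i (i + 1) f = 0}

/-- `i`-coboundaries. -/
def coboundariesSet (i : ℤ) : Set (Cochain dim F i) :=
  {f | ∃ g : Cochain dim F (i - 1), coboundary dim F sgn res (i - 1) i g = f}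

/-- Weighted Hamming distance from a cochain to a set of cochains. -/
def distTo {i : ℤ} (f : Cochain dim F i) (S : Set (Cochain dim F i)) : ℝ :=
  sInf ((fun g => cnorm dim F w (f - g)) '' S)

/-- Coboundaries on the link of `u`, at ambient dimension `i`. -/
def lcoboundariesSet (u : V) (i : ℤ) : Set (LCochain dim F u i) :=
  {f | ∃ g : LCochain dim F u (i - 1), lcoboundary dim F sgn res u (i - 1) i g = f}

/-- `cbe_{i - dim u - 1}(X_u, w_u, F_u) ≥ ε`, expressed at ambient dimension `i`. -/
def LinkCbeGe (u : V) (i : ℤ) (ε : ℝ) : Prop :=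
  ∀ f : LCochain dim F u i,
    ε * sInf ((fun g => lnorm dim F w d u (f - g)) '' lcoboundariesSet dim F sgn res u i)
      ≤ lnorm dim F w d u (lcoboundary dim F sgn res u i (i + 1) f)

/-- Extension of a link cochain by zero. -/
def extendByZero (u : V) {i : ℤ} (b : LCochain dim F u i) : Cochain dim F i := fun x =>
  if h : u ≤ x.1 then b ⟨x.1, x.2, h⟩ else 0

/-- `f` is mock `q`-locally minimal at `u`. -/
def MockMinAt (q : ℝ) (m : ℤ) (f : Cochain dim F m) (u : V) : Prop :=
  ∀ g : LCochain dim F u (m - 1),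
    cnorm dim F w f ≤
      cnorm dim F w (f + extendByZero dim F u (lcoboundary dim F sgn res u (m - 1) m g)) +
        q * w u

/-- `f` is mock `q`-locally minimal. -/
def MockMin (q : ℝ) (m : ℤ) (f : Cochain dim F m) : Prop :=
  ∀ u : V, 0 ≤ dim u → dim u ≤ m → MockMinAt dim F sgn res w q m f u

end Sheaf

/-- `ugr(X_u, w_u)` is an `(α, β)`-skeleton expander. -/
def LinkUgrSkeletonExpander (dim : V → ℤ) (d : ℤ) (w : V → ℝ) (u : V) (α β : ℝ) : Prop :=
  ∀ A ⊆ facesAbove dim (dim u + 1) u,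
    wsum (linkWeight dim d w u)
        ((facesAbove dim (dim u + 2) u).filter fun e =>
          ∃ x ∈ A, ∃ y ∈ A, x ≠ y ∧ x ≤ e ∧ y ≤ e)
      ≤ α * wsum (linkWeight dim d w u) A + β * wsum (linkWeight dim d w u) A ^ 2

/-- `ugr(X, w)` is an `(α, β)`-skeleton expander. -/
def UgrSkeletonExpander (dim : V → ℤ) (w : V → ℝ) (α β : ℝ) : Prop :=
  ∀ A ⊆ faces dim 0,
    wsum w ((faces dim 1).filter fun e => ∃ x ∈ A, ∃ y ∈ A, x ≠ y ∧ x ≤ e ∧ y ≤ e)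
      ≤ α * wsum w A + β * wsum w A ^ 2

/-- `NI^{1,1,2}(X, w)` is an `(α, β)`-skeleton expander. -/
def NI112SkeletonExpander (dim : V → ℤ) (w : V → ℝ) (bot : V) (α β : ℝ) : Prop :=
  ∀ A ⊆ faces dim 1,
    wsum w ((faces dim 2).filter fun z =>
        ∃ x ∈ A, ∃ y ∈ A, x ≠ y ∧ x ≤ z ∧ y ≤ z ∧ ∀ t : V, t ≤ x → t ≤ y → t = bot)
      ≤ α * wsum w A + β * wsum w A ^ 2

/-- Pairs of an `i`-face and a `k`-face that are incident. -/
def incidentPairs (dim : V → ℤ) (i k : ℤ) : Finset (V × V) :=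
  Finset.univ.filter fun p => dim p.1 = i ∧ dim p.2 = k ∧ p.1 ≤ p.2

/-- `F^max_{i,j,k}(X)`. -/
def Fmax (dim : V → ℤ) (i j k : ℤ) : ℕ :=
  (incidentPairs dim i k).sup fun p => (facesBetween dim j p.1 p.2).card

/-- `F^min_{i,j,k}(X)`. -/
def Fmin (dim : V → ℤ) (i j k : ℤ) : ℕ :=
  if h : (incidentPairs dim i k).Nonempty then
    ((incidentPairs dim i k).image fun p => (facesBetween dim j p.1 p.2).card).min'
      (h.image _)
  else 0

end FK

/-!
Every top face `y ≥ x` contributes `w(y) / #y(j)` to `w(x)` and `w(y) / #{x' ∈ X(j) : z ≤ x' ≤ y}`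
to `w(X(d)_z) · w_z(x)`. The first denominator lies between `F^min_{j,d}` and `F^max_{j,d}`, the
second between `F^min_{i,j,d}` and `F^max_{i,j,d}`, so the two sums agree term by term up to these
factors. Both denominators are positive since they count `x`, and `F^min_{i,j,d} ≥ 1` because the
covering relation raises the dimension by one, so every pair of incident faces has faces of every
intermediate dimension between them.
-/

open Finset

lemma div_mul_div_le_div_of_le {a m M B L : ℝ} (ha : 0 ≤ a) (hB : 0 < B) (hL : 0 < L)
    (hBM : B ≤ M) (hmL : m ≤ L) : m / M * (a / L) ≤ a / B := by
  rw [div_mul_div_comm, div_le_div_iff₀ (by nlinarith) hB]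
  nlinarith [mul_le_mul hmL hBM hB.le hL.le]

lemma div_le_div_mul_div_of_le {a m M B L : ℝ} (ha : 0 ≤ a) (hm : 0 < m) (hL : 0 < L)
    (hmB : m ≤ B) (hLM : L ≤ M) : a / B ≤ M / m * (a / L) := by
  rw [div_mul_div_comm, div_le_div_iff₀ (by linarith) (by positivity)]
  nlinarith [mul_le_mul hmB hLM hL.le (hm.le.trans hmB)]

namespace FK

variable {V : Type*} [Fintype V] [PartialOrder V] {dim : V → ℤ}

lemma facesBetween_nonempty (hcov : ∀ ⦃x y : V⦄, x ⋖ y → dim y = dim x + 1)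
    {a b : V} (hab : a ≤ b) {j : ℤ} (haj : dim a ≤ j) (hjb : j ≤ dim b) :
    (facesBetween dim j a b).Nonempty := by
  induction j, haj using Int.leInduction with
  | base => exact ⟨a, by simp [facesBetween, hab]⟩
  | succ j _ ih =>
    obtain ⟨t, ht⟩ := ih (by omega)
    simp only [facesBetween, mem_filter, mem_univ, true_and] at ht
    obtain ⟨htj, hat, htb⟩ := ht
    obtain ⟨c, htc, hcb⟩ := exists_covBy_le_of_lt (htb.lt_of_ne (by rintro rfl; omega))
    exact ⟨c, by simp [facesBetween, hcov htc, htj, hat.trans htc.le, hcb]⟩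

lemma facesBetween_of_forall_le {bot : V} (hbot : ∀ x, bot ≤ x) (j : ℤ) (y : V) :
    facesBetween dim j bot y = facesBelow dim j y := by
  ext t
  simp [facesBetween, facesBelow, hbot t]

lemma mem_incidentPairs {i k : ℤ} {a b : V} :
    (a, b) ∈ incidentPairs dim i k ↔ dim a = i ∧ dim b = k ∧ a ≤ b := by
  simp [incidentPairs]

lemma Fmin_le_card_facesBetween {i j k : ℤ} {a b : V} (hab : (a, b) ∈ incidentPairs dim i k) :
    Fmin dim i j k ≤ #(facesBetween dim j a b) := by
  rw [Fmin, dif_pos ⟨_, hab⟩]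
  exact min'_le _ _ (mem_image_of_mem _ hab)

lemma card_facesBetween_le_Fmax {i j k : ℤ} {a b : V} (hab : (a, b) ∈ incidentPairs dim i k) :
    #(facesBetween dim j a b) ≤ Fmax dim i j k :=
  le_sup (f := fun p : V × V => #(facesBetween dim j p.1 p.2)) hab

lemma one_le_Fmin (hcov : ∀ ⦃x y : V⦄, x ⋖ y → dim y = dim x + 1) {i j k : ℤ}
    (hij : i ≤ j) (hjk : j ≤ k) (hne : (incidentPairs dim i k).Nonempty) :
    1 ≤ Fmin dim i j k := by
  rw [Fmin, dif_pos hne]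
  refine le_min' _ _ _ fun n hn => ?_
  obtain ⟨⟨a, b⟩, hab, rfl⟩ := mem_image.mp hn
  obtain ⟨rfl, rfl, hle⟩ := mem_incidentPairs.mp hab
  exact card_pos.mpr (facesBetween_nonempty hcov hle hij hjk)

lemma div_card_facesBetween_bounds {d : ℤ} {bot : V} (hX : IsDPoset dim d bot) {i j : ℤ}
    (hij : i ≤ j) (hjd : j ≤ d) {z x y : V} (hz : dim z = i) (hx : dim x = j) (hzx : z ≤ x)
    (hy : y ∈ facesAbove dim d x) {a : ℝ} (ha : 0 ≤ a) :
    (Fmin dim (-1) j d : ℝ) / Fmax dim i j d * (a / #(facesBelow dim j y)) ≤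
        a / #(facesBetween dim j z y) ∧
      a / #(facesBetween dim j z y) ≤
        (Fmax dim (-1) j d : ℝ) / Fmin dim i j d * (a / #(facesBelow dim j y)) := by
  obtain ⟨hyd, hxy⟩ : dim y = d ∧ x ≤ y := by simpa [facesAbove] using hy
  have hzy : (z, y) ∈ incidentPairs dim i d := mem_incidentPairs.mpr ⟨hz, hyd, hzx.trans hxy⟩
  have hby : (bot, y) ∈ incidentPairs dim (-1) d :=
    mem_incidentPairs.mpr ⟨hX.dim_bot, hyd, hX.bot_le y⟩
  rw [← facesBetween_of_forall_le hX.bot_le]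
  have hB : (0 : ℝ) < #(facesBetween dim j z y) :=
    mod_cast card_pos.mpr ⟨x, by simp [facesBetween, hx, hzx, hxy]⟩
  have hL : (0 : ℝ) < #(facesBetween dim j bot y) :=
    mod_cast card_pos.mpr ⟨x, by simp [facesBetween, hx, hX.bot_le x, hxy]⟩
  have hFmin : (0 : ℝ) < Fmin dim i j d := mod_cast one_le_Fmin hX.dim_covBy hij hjd ⟨_, hzy⟩
  exact ⟨div_mul_div_le_div_of_le ha hB hL (mod_cast card_facesBetween_le_Fmax hzy)
      (mod_cast Fmin_le_card_facesBetween hby),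
    div_le_div_mul_div_of_le ha hFmin hL (mod_cast Fmin_le_card_facesBetween hzy)
      (mod_cast card_facesBetween_le_Fmax hby)⟩

end FK

theorem statement18_general
    (V : Type) [Fintype V] [PartialOrder V] (dim : V → ℤ) (d : ℤ) (bot : V)
    (hX : FK.IsDPoset dim d bot)
    (w : V → ℝ) (hw : FK.IsProperWeight dim d w)
    (i j : ℤ) (hij : i ≤ j) (hjd : j ≤ d)
    (z : V) (hz : dim z = i) (x : V) (hx : dim x = j) (hzx : z ≤ x) :
    (FK.wsum w (FK.facesAbove dim d z))⁻¹ *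
          ((FK.Fmin dim (-1) j d : ℝ) / (FK.Fmax dim i j d : ℝ)) * w x ≤
        FK.linkWeight dim d w z x ∧
      FK.linkWeight dim d w z x ≤
        (FK.wsum w (FK.facesAbove dim d z))⁻¹ *
          ((FK.Fmax dim (-1) j d : ℝ) / (FK.Fmin dim i j d : ℝ)) * w x := by
  have hW : 0 ≤ (FK.wsum w (FK.facesAbove dim d z))⁻¹ :=
    inv_nonneg.mpr (sum_nonneg fun y _ => (hw.pos y).le)
  have hwx := hw.eq x
  rw [hx] at hwx
  rw [FK.linkWeight, hx, hwx, mul_assoc, mul_assoc]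
  have hterm := fun y (hy : y ∈ FK.facesAbove dim d x) =>
    FK.div_card_facesBetween_bounds hX hij hjd hz hx hzx hy (hw.pos y).le
  refine ⟨mul_le_mul_of_nonneg_left ?_ hW, mul_le_mul_of_nonneg_left ?_ hW⟩ <;> rw [mul_sum]
  exacts [sum_le_sum fun y hy => (hterm y hy).1, sum_le_sum fun y hy => (hterm y hy).2]

/-- bounds on the weight induced on a link. -/
theorem statement18
    (V : Type) [Fintype V] [PartialOrder V] (dim : V → ℤ) (d : ℤ) (bot : V)
    (hX : FK.IsDPoset dim d bot)
    (w : V → ℝ) (hw : FK.IsProperWeight dim d w)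
    (i j : ℤ) (hi : -1 ≤ i) (hij : i ≤ j) (hjd : j ≤ d)
    (z : V) (hz : dim z = i) (x : V) (hx : dim x = j) (hzx : z ≤ x) :
    (FK.wsum w (FK.facesAbove dim d z))⁻¹ *
          ((FK.Fmin dim (-1) j d : ℝ) / (FK.Fmax dim i j d : ℝ)) * w x ≤
        FK.linkWeight dim d w z x ∧
      FK.linkWeight dim d w z x ≤
        (FK.wsum w (FK.facesAbove dim d z))⁻¹ *
          ((FK.Fmax dim (-1) j d : ℝ) / (FK.Fmin dim i j d : ℝ)) * w x :=
  statement18_general V dim d bot hX w hw i j hij hjd z hz x hx hzx
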